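/- Let A be an associative ring, ħ ∈ A a central element, and J ⊆ A a left ideal satisfying J·A ⊆ J + ħA. Then for every n ≥ 1, the additive subgroup generated by all n-fold products of elements of J + ħA is contained in J + ħⁿA; that is, (J + ħA)ⁿ ⊆ J + ħⁿA. -/
import Mathlib

lemma spanMul_mem_iff (A : Type*) [Ring A] (c : A) (x : A) :
    x ∈ Submodule.span ℤ {x : A | ∃ a, x = c * a} ↔ ∃ a, x = c * a := by
  have : Submodule.span ℤ {x : A | ∃ a, x = c * a} =
      LinearMap.range (LinearMap.mulLeft ℤ c) := by
    apply le_antisymm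
    · rw [Submodule.span_le]
      rintro x ⟨a, rfl⟩
      exact ⟨a, rfl⟩
    · rintro x ⟨a, rfl⟩
      exact Submodule.subset_span ⟨a, rfl⟩
  rw [this, LinearMap.mem_range]
  constructor
  · rintro ⟨a, rfl⟩; exact ⟨a, rfl⟩
  · rintro ⟨a, rfl⟩; exact ⟨a, rfl⟩

/-- Let `A` be a ring, `hbar` a central element, and `J` a left ideal with
`J·A ⊆ J + hbar·A`. Then `(J + hbar·A)ⁿ ⊆ J + hbarⁿ·A` for every `n ≥ 1`. -/
theorem stmt12 (A : Type*) [Ring A] (hbar : A)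
    (hcentral : ∀ a : A, hbar * a = a * hbar)
    (J : Submodule ℤ A)
    (hJ : ∀ (a : A), ∀ x ∈ J, a * x ∈ J)
    (hJA : J * (⊤ : Submodule ℤ A) ≤ J + Submodule.span ℤ {x : A | ∃ a, x = hbar * a}) :
    ∀ n : ℕ, 1 ≤ n →
      (J + Submodule.span ℤ {x : A | ∃ a, x = hbar * a}) ^ n ≤
        J + Submodule.span ℤ {x : A | ∃ a, x = hbar ^ n * a} := by
  have hcpow : ∀ (n : ℕ) (a : A), hbar ^ n * a = a * hbar ^ n := by
    intro n a
    induction n with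
    | zero => simp
    | succ k ih =>
      rw [pow_succ, mul_assoc, hcentral, ← mul_assoc, ih, mul_assoc]
  refine Nat.le_induction ?_ ?_
  · simp [pow_one]
  · intro n hn ih
    rw [pow_succ']
    calc (J + Submodule.span ℤ {x : A | ∃ a, x = hbar * a}) *
          (J + Submodule.span ℤ {x : A | ∃ a, x = hbar * a}) ^ n
        ≤ (J + Submodule.span ℤ {x : A | ∃ a, x = hbar * a}) *
          (J + Submodule.span ℤ {x : A | ∃ a, x = hbar ^ n * a}) :=
          mul_le_mul' le_rfl ih
      _ ≤ J + Submodule.span ℤ {x : A | ∃ a, x = hbar ^ (n + 1) * a} := by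
          rw [Submodule.mul_le]
          intro x hx y hy
          rw [Submodule.add_eq_sup, Submodule.mem_sup] at hx hy
          obtain ⟨j, hj, u, hu, rfl⟩ := hx
          obtain ⟨j', hj', v, hv, rfl⟩ := hy
          rw [spanMul_mem_iff] at hu hv
          obtain ⟨b, rfl⟩ := hu
          obtain ⟨c, rfl⟩ := hv
          have memJ : ∀ z ∈ J, z ∈ J + Submodule.span ℤ {x : A | ∃ a, x = hbar ^ (n + 1) * a} := by
            intro z hz
            rw [Submodule.add_eq_sup, Submodule.mem_sup]
            exact ⟨z, hz, 0, Submodule.zero_mem _, add_zero z⟩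
          have memH : ∀ a : A, hbar ^ (n + 1) * a ∈
              J + Submodule.span ℤ {x : A | ∃ a, x = hbar ^ (n + 1) * a} := by
            intro a
            rw [Submodule.add_eq_sup, Submodule.mem_sup]
            exact ⟨0, Submodule.zero_mem _, _, Submodule.subset_span ⟨a, rfl⟩, zero_add _⟩
          have t1 : j * j' ∈ J + Submodule.span ℤ {x : A | ∃ a, x = hbar ^ (n + 1) * a} :=
            memJ _ (hJ j j' hj')
          have t3 : hbar * b * j' ∈ J + Submodule.span ℤ {x : A | ∃ a, x = hbar ^ (n + 1) * a} := by
            refine memJ _ ?_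
            rw [mul_assoc]
            exact hJ hbar _ (hJ b j' hj')
          have t4 : hbar * b * (hbar ^ n * c) ∈
              J + Submodule.span ℤ {x : A | ∃ a, x = hbar ^ (n + 1) * a} := by
            have : hbar * b * (hbar ^ n * c) = hbar ^ (n + 1) * (b * c) := by
              calc hbar * b * (hbar ^ n * c) = hbar * (b * hbar ^ n) * c := by noncomm_ring
                _ = hbar * (hbar ^ n * b) * c := by rw [hcpow]
                _ = hbar ^ (n + 1) * (b * c) := by rw [pow_succ']; noncomm_ring
            rw [this]
            exact memH _
          have t2 : j * (hbar ^ n * c) ∈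
              J + Submodule.span ℤ {x : A | ∃ a, x = hbar ^ (n + 1) * a} := by
            have hjc : j * c ∈ J + Submodule.span ℤ {x : A | ∃ a, x = hbar * a} :=
              hJA (Submodule.mul_mem_mul hj (Submodule.mem_top))
            rw [Submodule.add_eq_sup, Submodule.mem_sup] at hjc
            obtain ⟨w, hw, z, hz, hwz⟩ := hjc
            rw [spanMul_mem_iff] at hz
            obtain ⟨d, rfl⟩ := hz
            have : j * (hbar ^ n * c) = hbar ^ n * w + hbar ^ (n + 1) * d := by
              rw [← mul_assoc, ← hcpow n j, mul_assoc, ← hwz, mul_add, ← mul_assoc, ← pow_succ]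
            rw [this]
            exact Submodule.add_mem _ (memJ _ (hJ _ _ hw)) (memH d)
          have expand : (j + hbar * b) * (j' + hbar ^ n * c) =
              j * j' + j * (hbar ^ n * c) + hbar * b * j' + hbar * b * (hbar ^ n * c) := by
            noncomm_ring
          rw [expand]
          exact Submodule.add_mem _ (Submodule.add_mem _ (Submodule.add_mem _ t1 t2) t3) t4
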